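/- Let f ∈ ℝ[X₁,…,Xₙ] with f(0) = 0 and 0 an isolated real critical point of f, and suppose R > 0 is a faithful radius of 0. Then 0 is a saddle point of f if and only if f_R^max > 0 and f_R^min < 0. -/

import Mathlib

open MvPolynomial Metric Set

noncomputable section

/-- The gradient of a real polynomial `f`, as a map on `ℝⁿ`. -/
def grad {n : ℕ} (f : MvPolynomial (Fin n) ℝ) (x : EuclideanSpace ℝ (Fin n)) :
    EuclideanSpace ℝ (Fin n) :=
  WithLp.toLp 2 (fun i => eval (fun j => x j) (pderiv i f))

/-- Evaluation of a polynomial as a function on `ℝⁿ`. -/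
def evalP {n : ℕ} (f : MvPolynomial (Fin n) ℝ) (x : EuclideanSpace ℝ (Fin n)) : ℝ :=
  eval (fun j => x j) f

/-- The tangency variety `Γ_ℝ(f) = {x | ∃ λ, ∇f(x) = λ x}`. -/
def Gamma {n : ℕ} (f : MvPolynomial (Fin n) ℝ) : Set (EuclideanSpace ℝ (Fin n)) :=
  {x | ∃ l : ℝ, grad f x = l • x}

/-- The set of real critical points `Crit_ℝ(f) = {x | ∇f(x) = 0}`. -/
def Crit {n : ℕ} (f : MvPolynomial (Fin n) ℝ) : Set (EuclideanSpace ℝ (Fin n)) :=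
  {x | grad f x = 0}

/-- `f_r^min`: the minimum of `f` over the closed ball `B_r` (attained, since `B_r`
is compact and `f` is continuous). -/
def fmin {n : ℕ} (f : MvPolynomial (Fin n) ℝ) (r : ℝ) : ℝ :=
  sInf (evalP f '' closedBall (0 : EuclideanSpace ℝ (Fin n)) r)

/-- `f_r^max`: the maximum of `f` over the closed ball `B_r`. -/
def fmax {n : ℕ} (f : MvPolynomial (Fin n) ℝ) (r : ℝ) : ℝ :=
  sSup (evalP f '' closedBall (0 : EuclideanSpace ℝ (Fin n)) r)

/-- `R` is a faithful radius of the critical point `0` of `f`: it is an isolation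
radius, `Γ_ℝ(f) ∩ B_R` is connected, and `Γ_ℝ(f) ∩ f⁻¹(0) ∩ B_R = {0}`. -/
def IsFaithfulRadius {n : ℕ} (f : MvPolynomial (Fin n) ℝ) (R : ℝ) : Prop :=
  0 < R ∧ Crit f ∩ closedBall (0 : EuclideanSpace ℝ (Fin n)) R = {0} ∧
    IsConnected (Gamma f ∩ closedBall (0 : EuclideanSpace ℝ (Fin n)) R) ∧
    Gamma f ∩ {x | evalP f x = 0} ∩ closedBall (0 : EuclideanSpace ℝ (Fin n)) R = {0}

/-! Extremizers of `f` on `B_R` lie on `Γ_ℝ(f)`: interior ones are critical points, and on the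
sphere `∇f` is a multiple of `x` by Lagrange. If `0` were a local minimizer although
`f_R^min < 0`, the connected set `Γ_ℝ(f) ∩ B_R`, on which `f` vanishes only at `0`, would be split
by the open sets `{f < 0}` (containing the minimizer) and `{f > 0} ∪ U`, where `U` is a
neighbourhood of `0` on which `f ≥ 0`. The converse is immediate: if `f_R^min ≥ 0 = f(0)`, then
`0` minimizes `f` on `B_R`. The same holds for maxima. -/

section Calculus

variable {n : ℕ}

lemma evalP_C (a : ℝ) : evalP (C a : MvPolynomial (Fin n) ℝ) = fun _ => a := by
  ext; simp [evalP]

lemma evalP_add (p q : MvPolynomial (Fin n) ℝ) : evalP (p + q) = evalP p + evalP q := by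
  ext; simp [evalP]

lemma evalP_mul_X (p : MvPolynomial (Fin n) ℝ) (j : Fin n) :
    evalP (p * X j) = fun y => evalP p y * y j := by
  ext; simp [evalP]

section Grad

variable (x : EuclideanSpace ℝ (Fin n))

lemma grad_C (a : ℝ) : grad (C a) x = 0 := by
  ext; simp [grad]

lemma grad_add (p q : MvPolynomial (Fin n) ℝ) : grad (p + q) x = grad p x + grad q x := by
  ext; simp [grad]

lemma grad_mul_X (p : MvPolynomial (Fin n) ℝ) (j : Fin n) :
    grad (p * X j) x = x j • grad p x + evalP p x • EuclideanSpace.single j 1 := by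
  ext i
  by_cases h : i = j
  · subst h; simp [grad, evalP, add_comm, mul_comm]
  · simp [grad, evalP, h, mul_comm]

end Grad

lemma hasStrictFDerivAt_evalP (f : MvPolynomial (Fin n) ℝ) (x : EuclideanSpace ℝ (Fin n)) :
    HasStrictFDerivAt (evalP f) (innerSL ℝ (grad f x)) x := by
  induction f using MvPolynomial.induction_on with
  | C a => simpa [evalP_C, grad_C] using hasStrictFDerivAt_const a x
  | add p q hp hq => simpa [evalP_add, grad_add] using hp.add hq
  | mul_X p j hp =>
    rw [evalP_mul_X]
    refine (hp.mul (EuclideanSpace.proj j).hasStrictFDerivAt).congr_fderiv ?_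
    ext v
    simp [grad_mul_X, EuclideanSpace.inner_single_left]
    ring

lemma continuous_evalP (f : MvPolynomial (Fin n) ℝ) : Continuous (evalP f) :=
  (continuous_eval f).comp (PiLp.continuous_ofLp 2 _)

end Calculus

section Tangency

variable {n : ℕ} {f : MvPolynomial (Fin n) ℝ} {x : EuclideanSpace ℝ (Fin n)}

lemma grad_eq_zero_of_isLocalExtr (h : IsLocalExtr (evalP f) x) : grad f x = 0 :=
  innerSL_inj.1 <| (h.hasFDerivAt_eq_zero (hasStrictFDerivAt_evalP f x).hasFDerivAt).trans
    (map_zero _).symm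

lemma mem_Gamma_of_isLocalExtrOn_sphere (hx : x ≠ 0)
    (h : IsLocalExtrOn (evalP f) (sphere 0 ‖x‖) x) : x ∈ Gamma f := by
  have hsphere : sphere (0 : EuclideanSpace ℝ (Fin n)) ‖x‖ = {y | ‖y‖ ^ 2 = ‖x‖ ^ 2} := by
    ext y; simp
  rw [hsphere] at h
  obtain ⟨a, b, hab, hlag⟩ := h.exists_multipliers_of_hasStrictFDerivAt_1d
    (hasStrictFDerivAt_norm_sq x) (hasStrictFDerivAt_evalP f x)
  have hvec : (2 * a) • x + b • grad f x = 0 := (innerSL_inj (𝕜 := ℝ)).1 <| by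
    rw [map_zero, ← hlag, map_add, map_smul, map_smul, mul_comm, mul_smul, ofNat_smul_eq_nsmul]
  have hb : b ≠ 0 := by
    rintro rfl
    have ha : a ≠ 0 := fun ha => hab (by simp [ha])
    simp [ha, hx] at hvec
  refine ⟨-(2 * a / b), ?_⟩
  rw [← inv_smul_smul₀ hb (grad f x), eq_neg_of_add_eq_zero_right hvec, smul_neg, smul_smul,
    ← neg_smul]
  ring_nf

lemma mem_Gamma_of_isExtrOn_closedBall {R : ℝ} (hR : 0 < R) (hx : x ∈ closedBall 0 R)
    (h : IsExtrOn (evalP f) (closedBall 0 R) x) : x ∈ Gamma f := by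
  rcases (mem_closedBall_zero_iff.1 hx).lt_or_eq with hlt | heq
  · refine ⟨0, ?_⟩
    rw [zero_smul]
    exact grad_eq_zero_of_isLocalExtr (h.isLocalExtr (closedBall_mem_nhds_of_mem
      (mem_ball_zero_iff.2 hlt)))
  · have hx0 : x ≠ 0 := by rintro rfl; simp [← heq] at hR
    refine mem_Gamma_of_isLocalExtrOn_sphere hx0 (h.on_subset ?_).localize
    rw [heq]
    exact sphere_subset_closedBall

end Tangency

lemma IsPreconnected.isMinOn_of_isLocalMin {X β : Type*} [TopologicalSpace X] [LinearOrder β]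
    [TopologicalSpace β] [OrderClosedTopology β] {K : Set X} (hK : IsPreconnected K) {g : X → β}
    (hg : Continuous g) {p : X} (hp : p ∈ K) (hlevel : ∀ x ∈ K, g x = g p → x = p)
    (hmin : IsLocalMin g p) : IsMinOn g K p := by
  obtain ⟨U, hU, hUopen, hpU⟩ := mem_nhds_iff.1 hmin
  by_contra hnot
  obtain ⟨x, hxK, hx⟩ : ∃ x ∈ K, g x < g p := by
    simpa [isMinOn_iff] using hnot
  have hcover : K ⊆ ({y | g p < g y} ∪ U) ∪ {y | g y < g p} := by
    intro y hy
    rcases lt_trichotomy (g y) (g p) with h | h | h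
    · exact Or.inr h
    · exact Or.inl (Or.inr (hlevel y hy h ▸ hpU))
    · exact Or.inl (Or.inl h)
  obtain ⟨y, -, hyU, hy⟩ := hK _ _ ((isOpen_lt continuous_const hg).union hUopen)
    (isOpen_lt hg continuous_const) hcover ⟨p, hp, Or.inr hpU⟩ ⟨x, hxK, hx⟩
  rcases hyU with h | h
  · exact (lt_asymm h) hy
  · exact (not_lt.2 (hU h)) hy

section Extrema

variable {n : ℕ} (f : MvPolynomial (Fin n) ℝ) {R : ℝ}

lemma exists_fmin_eq (hR : 0 ≤ R) : ∃ x ∈ closedBall 0 R,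
    fmin f R = evalP f x ∧ IsMinOn (evalP f) (closedBall 0 R) x :=
  (isCompact_closedBall 0 R).exists_sInf_image_eq_and_le (nonempty_closedBall.2 hR)
    (continuous_evalP f).continuousOn

lemma exists_fmax_eq (hR : 0 ≤ R) : ∃ x ∈ closedBall 0 R,
    fmax f R = evalP f x ∧ IsMaxOn (evalP f) (closedBall 0 R) x :=
  (isCompact_closedBall 0 R).exists_sSup_image_eq_and_ge (nonempty_closedBall.2 hR)
    (continuous_evalP f).continuousOn

end Extrema

namespace IsFaithfulRadius

variable {n : ℕ} {f : MvPolynomial (Fin n) ℝ} {R : ℝ}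

lemma zero_mem (hR : IsFaithfulRadius f R) :
    (0 : EuclideanSpace ℝ (Fin n)) ∈ Gamma f ∧ evalP f 0 = 0 := by
  have h0 := hR.2.2.2.symm ▸ mem_singleton (0 : EuclideanSpace ℝ (Fin n))
  exact h0.1

lemma eq_zero_of_evalP_eq_zero (hR : IsFaithfulRadius f R) {x : EuclideanSpace ℝ (Fin n)}
    (hx : x ∈ Gamma f ∩ closedBall 0 R) (hfx : evalP f x = 0) : x = 0 := by
  have h : x ∈ Gamma f ∩ {x | evalP f x = 0} ∩ closedBall 0 R := ⟨⟨hx.1, hfx⟩, hx.2⟩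
  rwa [hR.2.2.2] at h

lemma not_isLocalMin_iff (hR : IsFaithfulRadius f R) :
    ¬IsLocalMin (evalP f) 0 ↔ fmin f R < 0 := by
  obtain ⟨x, hx, hfx, hxmin⟩ := exists_fmin_eq f hR.1.le
  have hf0 := hR.zero_mem.2
  have hconn := hR.2.2.1.isPreconnected
  rw [hfx]
  constructor
  · intro hnot
    by_contra! hle
    refine hnot (IsMinOn.isLocalMin (fun y hy => ?_) (closedBall_mem_nhds 0 hR.1))
    exact hf0.trans_le (hle.trans (hxmin hy))
  · intro hneg hloc
    have hxK : x ∈ Gamma f ∩ closedBall 0 R :=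
      ⟨mem_Gamma_of_isExtrOn_closedBall hR.1 hx (Or.inl hxmin), hx⟩
    have hmin := hconn.isMinOn_of_isLocalMin (continuous_evalP f)
      ⟨hR.zero_mem.1, mem_closedBall_self hR.1.le⟩
      (fun y hy hfy => hR.eq_zero_of_evalP_eq_zero hy (hfy.trans hf0)) hloc
    exact ((hmin hxK).trans_lt hneg).ne hf0

lemma not_isLocalMax_iff (hR : IsFaithfulRadius f R) :
    ¬IsLocalMax (evalP f) 0 ↔ 0 < fmax f R := by
  obtain ⟨x, hx, hfx, hxmax⟩ := exists_fmax_eq f hR.1.le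
  have hf0 := hR.zero_mem.2
  have hconn := hR.2.2.1.isPreconnected
  rw [hfx]
  constructor
  · intro hnot
    by_contra! hle
    refine hnot (IsMaxOn.isLocalMax (fun y hy => ?_) (closedBall_mem_nhds 0 hR.1))
    exact ((hxmax hy).trans hle).trans_eq hf0.symm
  · intro hpos hloc
    have hxK : x ∈ Gamma f ∩ closedBall 0 R :=
      ⟨mem_Gamma_of_isExtrOn_closedBall hR.1 hx (Or.inr hxmax), hx⟩
    -- a local maximum of `f` is a local minimum of `f` viewed in `ℝᵒᵈ`
    have hmax := hconn.isMinOn_of_isLocalMin (β := ℝᵒᵈ) (continuous_evalP f)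
      ⟨hR.zero_mem.1, mem_closedBall_self hR.1.le⟩
      (fun y hy hfy => hR.eq_zero_of_evalP_eq_zero hy (hfy.trans hf0)) hloc
    exact (hpos.trans_le (hmax hxK)).ne' hf0

end IsFaithfulRadius

theorem stmt6_general (n : ℕ) (f : MvPolynomial (Fin n) ℝ)
    (R : ℝ) (hR : IsFaithfulRadius f R) :
    (¬ IsLocalMin (evalP f) 0 ∧ ¬ IsLocalMax (evalP f) 0) ↔ (0 < fmax f R ∧ fmin f R < 0) := by
  rw [hR.not_isLocalMin_iff, hR.not_isLocalMax_iff, and_comm]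

/-- If `0` is an isolated real critical point of `f` with `f(0) = 0` and `R` is a
faithful radius of `0`, then `0` is a saddle point of `f` (neither a local minimizer nor a local maximizer) iff `f_R^max > 0` and `f_R^min < 0`. -/
theorem stmt6 (n : ℕ) (f : MvPolynomial (Fin n) ℝ)
    (hf0 : evalP f 0 = 0) (hgrad : grad f 0 = 0)
    (hiso : ∃ O ∈ nhds (0 : EuclideanSpace ℝ (Fin n)), Crit f ∩ O = {0})
    (R : ℝ) (hR : IsFaithfulRadius f R) :
    (¬ IsLocalMin (evalP f) 0 ∧ ¬ IsLocalMax (evalP f) 0) ↔ (0 < fmax f R ∧ fmin f R < 0) :=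
  stmt6_general n f R hR
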